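/- Let u,v be vertices with d_G(u,v) ≥ 2 and let L be a 2-hop path cover labelling. Then the edge set of the shortest path graph G_uv equals the union, over all landmarks r with (r,δ_ur) ∈ L(u), (r,δ_vr) ∈ L(v), r ∉ {u,v}, and δ_ur + δ_vr = d_G(u,v), of the edge sets E(G_ur) ∪ E(G_rv). -/

import Mathlib

/-! A shortest `u`-`v` path through a landmark `r` splits at `r` into shortest `u`-`r` and
`r`-`v` paths; conversely, when `d(u,r) + d(r,v) = d(u,v)`, concatenating a shortest path
through `e` on one side with any shortest path on the other gives a shortest `u`-`v` path
through `e`. The path-cover property supplies, on every shortest `u`-`v` path, a landmark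
`r ∉ {u,v}` whose labels add up to `d(u,v)`. -/

open SimpleGraph

variable {V : Type}

/-- The edge `e` lies on some shortest `u`-`v` path in `G`
(i.e. `e` is an edge of the shortest path graph `G_uv`). -/
def onSPedge (G : SimpleGraph V) (u v : V) (e : Sym2 V) : Prop :=
  ∃ w : G.Walk u v, w.length = G.dist u v ∧ e ∈ w.edges

/-- The vertex `x` lies on some shortest `u`-`v` path in `G`
(i.e. `x` is a vertex of the shortest path graph `G_uv`). -/
def onSPvert (G : SimpleGraph V) (u v x : V) : Prop :=
  ∃ w : G.Walk u v, w.length = G.dist u v ∧ x ∈ w.support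

/-- A labelling is valid if every entry records the true graph distance. -/
def ValidLab (G : SimpleGraph V) (L : V → Set (V × ℕ)) : Prop :=
  ∀ v r δ, (r, δ) ∈ L v → δ = G.dist v r

/-- `L` is a 2-hop distance cover: for all `u v`, `d_G(u,v)` is the minimum of
`δ_ur + δ_vr` over common landmarks `r`. -/
def TwoHopDistCover (G : SimpleGraph V) (L : V → Set (V × ℕ)) : Prop :=
  ∀ u v : V,
    IsLeast {d : ℕ | ∃ r δu δv, (r, δu) ∈ L u ∧ (r, δv) ∈ L v ∧ d = δu + δv}
      (G.dist u v)

/-- `L` is a 2-hop path cover: a 2-hop distance cover such that for every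
shortest path `p` between `u` and `v` with more than one edge, `d_G(u,v)` is the
minimum of `δ_ur + δ_vr` over common landmarks `r` lying on `p` other than `u, v`. -/
def TwoHopPathCover (G : SimpleGraph V) (L : V → Set (V × ℕ)) : Prop :=
  TwoHopDistCover G L ∧
  ∀ (u v : V) (p : G.Walk u v), p.IsPath → p.length = G.dist u v → 2 ≤ p.length →
    IsLeast {d : ℕ | ∃ r δu δv, (r, δu) ∈ L u ∧ (r, δv) ∈ L v ∧
      r ∈ p.support ∧ r ≠ u ∧ r ≠ v ∧ d = δu + δv} (G.dist u v)

section

variable {G : SimpleGraph V} {u v r : V} {e : Sym2 V}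

theorem onSPedge_or_onSPedge_of_mem_support (w : G.Walk u v) (hw : w.length = G.dist u v)
    (hr : r ∈ w.support) (he : e ∈ w.edges) : onSPedge G u r e ∨ onSPedge G r v e := by
  obtain ⟨p, q, rfl⟩ := Walk.mem_support_iff_exists_append.mp hr
  rw [Walk.edges_append, List.mem_append] at he
  exact he.imp
    (fun he ↦ ⟨p, length_eq_dist_of_subwalk hw (Walk.isSubwalk_of_append_left rfl), he⟩)
    (fun he ↦ ⟨q, length_eq_dist_of_subwalk hw (Walk.isSubwalk_of_append_right rfl), he⟩)

theorem onSPedge.extend_right (he : onSPedge G u r e) (hrv : G.Reachable r v)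
    (hsum : G.dist u r + G.dist r v = G.dist u v) : onSPedge G u v e := by
  obtain ⟨p, hp, he⟩ := he
  obtain ⟨q, hq⟩ := hrv.exists_walk_length_eq_dist
  exact ⟨p.append q, by rw [Walk.length_append, hp, hq, hsum], by simp [Walk.edges_append, he]⟩

theorem onSPedge.extend_left (he : onSPedge G r v e) (hur : G.Reachable u r)
    (hsum : G.dist u r + G.dist r v = G.dist u v) : onSPedge G u v e := by
  obtain ⟨q, hq, he⟩ := he
  obtain ⟨p, hp⟩ := hur.exists_walk_length_eq_dist
  exact ⟨p.append q, by rw [Walk.length_append, hp, hq, hsum], by simp [Walk.edges_append, he]⟩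

theorem onSPedge_of_onSPedge_or_onSPedge (huv : G.Reachable u v)
    (hsum : G.dist u r + G.dist r v = G.dist u v)
    (he : onSPedge G u r e ∨ onSPedge G r v e) : onSPedge G u v e := by
  rcases he with he | he
  · have hur : G.Reachable u r := let ⟨p, _⟩ := he; p.reachable
    exact he.extend_right (hur.symm.trans huv) hsum
  · have hrv : G.Reachable r v := let ⟨q, _⟩ := he; q.reachable
    exact he.extend_left (huv.trans hrv.symm) hsum

end

theorem spg_edges_eq_union_over_cover_general (G : SimpleGraph V)
    (L : V → Set (V × ℕ)) (hL : ValidLab G L) (hC : TwoHopPathCover G L)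
    (u v : V) (hd : 2 ≤ G.dist u v) :
    ∀ e : Sym2 V,
      onSPedge G u v e ↔
      ∃ r δu δv, (r, δu) ∈ L u ∧ (r, δv) ∈ L v ∧ r ≠ u ∧ r ≠ v ∧
        δu + δv = G.dist u v ∧ (onSPedge G u r e ∨ onSPedge G r v e) := by
  intro e
  constructor
  · rintro ⟨w, hw, he⟩
    obtain ⟨r, δu, δv, hru, hrv, hr, hru', hrv', hsum⟩ :=
      (hC.2 u v w (w.isPath_of_length_eq_dist hw) hw (hw ▸ hd)).1
    exact ⟨r, δu, δv, hru, hrv, hru', hrv', hsum.symm,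
      onSPedge_or_onSPedge_of_mem_support w hw hr he⟩
  · rintro ⟨r, δu, δv, hru, hrv, -, -, hsum, he⟩
    rw [hL u r δu hru, hL v r δv hrv, dist_comm (u := v)] at hsum
    exact onSPedge_of_onSPedge_or_onSPedge (Reachable.of_dist_ne_zero (by omega)) hsum he

/-- for a valid 2-hop path cover `L` and vertices `u, v` with
`d_G(u,v) ≥ 2`, the edge set of `G_uv` equals the union of `E(G_ur) ∪ E(G_rv)`
over landmarks `r ∉ {u,v}` in both labels with `δ_ur + δ_vr = d_G(u,v)`. -/
theorem spg_edges_eq_union_over_cover (G : SimpleGraph V) (hG : G.Connected)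
    (L : V → Set (V × ℕ)) (hL : ValidLab G L) (hC : TwoHopPathCover G L)
    (u v : V) (hd : 2 ≤ G.dist u v) :
    ∀ e : Sym2 V,
      onSPedge G u v e ↔
      ∃ r δu δv, (r, δu) ∈ L u ∧ (r, δv) ∈ L v ∧ r ≠ u ∧ r ≠ v ∧
        δu + δv = G.dist u v ∧ (onSPedge G u r e ∨ onSPedge G r v e) :=
  spg_edges_eq_union_over_cover_general G L hL hC u v hd
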